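/- arXiv:1407.5613 — 3 statements merged into one kernel-verified Lean document; each statement's English description precedes it below -/
import Mathlib

section
/- Let F be a finite field with q elements, n ≥ 2, 0 ≤ k ≤ n−2, and let U ⊆ F^n with |U| = q^(n−1). If S is a (k+1)-dimensional F-linear subspace of F^n whose corresponding k-subspace at infinity is not determined by U, then for every x ∈ F^n there exist a k-dimensional linear subspace D ⊆ S and a point y ∈ x + S such that U ∩ (x + S) = y + D; that is, each of the q^(n−k−1) cosets of S contains exactly q^k points of U constituting one complete affine k-subspace. -/
/-!
If the coset `x + S` is not determined by `U`, the slice `A = U ∩ (x + S)` lies in the affine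
span of `A`, an affine subspace of dimension at most `k` inside `x + S`; hence `|A| ≤ q ^ k`.
The `q ^ (n - k - 1)` cosets of `S` partition `U`, and `|U| = q ^ (n - 1)`, so every slice has
exactly `q ^ k` points. A slice of that size fills its affine span, which must then have
dimension exactly `k`.
-/

open Pointwise

/-- The subspace at infinity corresponding to the linear subspace `S ≤ V` is *determined*
by the affine point set `U ⊆ V` if for some `x` the coset `x + S` is affinely spanned by
`U ∩ (x + S)`, i.e. the coset is contained in the affine span of `U ∩ (x + S)`. -/
def IsDeterminedBy {F V : Type*} [Field F] [AddCommGroup V] [Module F V]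
    (U : Set V) (S : Submodule F V) : Prop :=
  ∃ x : V, x +ᵥ (S : Set V) ⊆ (affineSpan F (U ∩ (x +ᵥ (S : Set V))) : Set V)

namespace Set

theorem ncard_inter_preimage_singleton_eq_of_le {α β : Type*} [Finite β] {s : Set α}
    (hs : s.Finite) (f : α → β) {m : ℕ} (hle : ∀ b, (s ∩ f ⁻¹' {b}).ncard ≤ m)
    (hcard : s.ncard = Nat.card β * m) (b : β) : (s ∩ f ⁻¹' {b}).ncard = m := by
  classical
  have := Fintype.ofFinite β
  lift s to Finset α using hs
  have hfiber : ∀ b, ((s : Set α) ∩ f ⁻¹' {b}).ncard = (s.filter (f · = b)).card := by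
    intro b
    rw [← ncard_coe_finset, Finset.coe_filter]
    rfl
  have hsum : ∑ b, ((s : Set α) ∩ f ⁻¹' {b}).ncard = ∑ _ : β, m := by
    rw [Finset.sum_congr rfl fun b _ => hfiber b,
      ← Finset.card_eq_sum_card_fiberwise fun a _ => Finset.mem_univ (f a), ← ncard_coe_finset,
      hcard, Finset.sum_const, Finset.card_univ, smul_eq_mul, Nat.card_eq_fintype_card]
  exact (Finset.sum_eq_sum_iff_of_le fun b _ => hle b).1 hsum b (Finset.mem_univ b)

end Set

section

variable {F V : Type*} [Field F] [AddCommGroup V] [Module F V]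

theorem AffineSubspace.coe_mk'_eq_vadd (x : V) (S : Submodule F V) :
    (AffineSubspace.mk' x S : Set V) = x +ᵥ (S : Set V) := by
  ext z
  rw [SetLike.mem_coe, AffineSubspace.mem_mk', Set.mem_vadd_set_iff_neg_vadd_mem, vsub_eq_sub,
    vadd_eq_add, neg_add_eq_sub, SetLike.mem_coe]

theorem Submodule.preimage_mkQ_singleton (S : Submodule F V) (x : V) :
    S.mkQ ⁻¹' {S.mkQ x} = x +ᵥ (S : Set V) := by
  ext z
  rw [← AffineSubspace.coe_mk'_eq_vadd, SetLike.mem_coe, AffineSubspace.mem_mk',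
    Set.mem_preimage, Set.mem_singleton_iff, mkQ_apply, mkQ_apply, Quotient.eq, vsub_eq_sub]

variable (F) in
theorem coe_affineSpan_eq_vadd {A : Set V} {y : V} (hy : y ∈ A) :
    (affineSpan F A : Set V) = y +ᵥ (vectorSpan F A : Set V) := by
  rw [← AffineSubspace.mk'_eq (mem_affineSpan F hy), direction_affineSpan,
    AffineSubspace.coe_mk'_eq_vadd]

theorem vectorSpan_lt_of_not_subset_affineSpan {A : Set V} {x : V} {S : Submodule F V}
    (hA : A ⊆ x +ᵥ (S : Set V)) (hAne : A.Nonempty)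
    (hspan : ¬ x +ᵥ (S : Set V) ⊆ affineSpan F A) : vectorSpan F A < S := by
  rw [← AffineSubspace.coe_mk'_eq_vadd] at hA hspan
  have hle : affineSpan F A ≤ AffineSubspace.mk' x S := affineSpan_le.2 hA
  refine lt_of_le_of_ne ?_ fun h => hspan ?_
  · simpa [direction_affineSpan] using AffineSubspace.direction_le hle
  · rw [AffineSubspace.eq_of_direction_eq_of_nonempty_of_le
      (by rw [direction_affineSpan, h, AffineSubspace.direction_mk'])
      ((affineSpan_nonempty F).2 hAne) hle]

variable [Finite V]

theorem ncard_vadd_submodule (y : V) (D : Submodule F V) :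
    (y +ᵥ (D : Set V)).ncard = Nat.card F ^ Module.finrank F D := by
  rw [Set.ncard_vadd_set, ← Nat.card_coe_set_eq, SetLike.coe_sort_coe,
    Module.natCard_eq_pow_finrank (K := F)]

theorem natCard_quotient (S : Submodule F V) :
    Nat.card (V ⧸ S) = Nat.card F ^ (Module.finrank F V - Module.finrank F S) := by
  rw [Module.natCard_eq_pow_finrank (K := F), ← S.finrank_quotient_add_finrank,
    Nat.add_sub_cancel]

variable [Finite F]

theorem ncard_le_of_not_subset_affineSpan {A : Set V} {x : V} {S : Submodule F V} {k : ℕ}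
    (hS : Module.finrank F S = k + 1) (hA : A ⊆ x +ᵥ (S : Set V))
    (hspan : ¬ x +ᵥ (S : Set V) ⊆ affineSpan F A) : A.ncard ≤ Nat.card F ^ k := by
  obtain rfl | ⟨y, hy⟩ := A.eq_empty_or_nonempty
  · simp
  have hlt := Submodule.finrank_lt_finrank_of_lt
    (vectorSpan_lt_of_not_subset_affineSpan hA ⟨y, hy⟩ hspan)
  calc A.ncard ≤ (y +ᵥ (vectorSpan F A : Set V)).ncard :=
        Set.ncard_le_ncard (coe_affineSpan_eq_vadd F hy ▸ subset_affineSpan F A) (Set.toFinite _)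
    _ = Nat.card F ^ Module.finrank F (vectorSpan F A) := ncard_vadd_submodule y _
    _ ≤ Nat.card F ^ k := Nat.pow_le_pow_right Nat.card_pos (by omega)

theorem exists_eq_vadd_of_ncard_eq {A : Set V} {x : V} {S : Submodule F V} {k : ℕ}
    (hS : Module.finrank F S = k + 1) (hA : A ⊆ x +ᵥ (S : Set V))
    (hspan : ¬ x +ᵥ (S : Set V) ⊆ affineSpan F A) (hcard : A.ncard = Nat.card F ^ k) :
    ∃ D : Submodule F V, D ≤ S ∧ Module.finrank F D = k ∧
      ∃ y ∈ x +ᵥ (S : Set V), A = y +ᵥ (D : Set V) := by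
  obtain ⟨y, hy⟩ : A.Nonempty :=
    Set.nonempty_of_ncard_ne_zero (hcard ▸ (pow_pos Nat.card_pos k).ne')
  have hlt := vectorSpan_lt_of_not_subset_affineSpan hA ⟨y, hy⟩ hspan
  have hAsub : A ⊆ y +ᵥ (vectorSpan F A : Set V) :=
    coe_affineSpan_eq_vadd F hy ▸ subset_affineSpan F A
  have hle : Nat.card F ^ k ≤ Nat.card F ^ Module.finrank F (vectorSpan F A) :=
    hcard ▸ ncard_vadd_submodule y (vectorSpan F A) ▸ Set.ncard_le_ncard hAsub (Set.toFinite _)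
  have hrank : Module.finrank F (vectorSpan F A) = k := by
    have := Submodule.finrank_lt_finrank_of_lt hlt
    have := (Nat.pow_le_pow_iff_right Finite.one_lt_card).1 hle
    omega
  refine ⟨vectorSpan F A, hlt.le, hrank, y, hA hy, Set.eq_of_subset_of_ncard_le hAsub ?_ ?_⟩
  · rw [ncard_vadd_submodule, hrank, hcard]
  · exact Set.toFinite _

end

theorem stmt_2_general {F : Type*} [Field F] [Fintype F] {q n k : ℕ}
    (hq : Fintype.card F = q)
    (U : Set (Fin n → F)) (hU : U.ncard = q ^ (n - 1))
    (S : Submodule F (Fin n → F)) (hS : Module.finrank F S = k + 1)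
    (hnd : ¬ IsDeterminedBy U S) :
    ∀ x : Fin n → F, ∃ D : Submodule F (Fin n → F), D ≤ S ∧ Module.finrank F D = k ∧
      ∃ y ∈ x +ᵥ (S : Set (Fin n → F)),
        U ∩ (x +ᵥ (S : Set (Fin n → F))) = y +ᵥ (D : Set (Fin n → F)) := by
  rw [← hq, ← Nat.card_eq_fintype_card] at hU
  have hslice_le (x : Fin n → F) : (U ∩ (x +ᵥ (S : Set _))).ncard ≤ Nat.card F ^ k :=
    ncard_le_of_not_subset_affineSpan hS Set.inter_subset_right fun h => hnd ⟨x, h⟩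
  have hUcard : U.ncard = Nat.card ((Fin n → F) ⧸ S) * Nat.card F ^ k := by
    have hSn := S.finrank_le
    rw [hS, Module.finrank_fin_fun] at hSn
    rw [hU, natCard_quotient, Module.finrank_fin_fun, hS, ← pow_add]
    congr 1
    omega
  intro x
  have hslice : (U ∩ (x +ᵥ (S : Set _))).ncard = Nat.card F ^ k := by
    rw [← S.preimage_mkQ_singleton]
    refine Set.ncard_inter_preimage_singleton_eq_of_le U.toFinite S.mkQ (fun c => ?_) hUcard _
    obtain ⟨y, rfl⟩ := S.mkQ_surjective c
    rw [S.preimage_mkQ_singleton]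
    exact hslice_le y
  exact exists_eq_vadd_of_ncard_eq hS Set.inter_subset_right (fun h => hnd ⟨x, h⟩) hslice

/-- If `|U| = q^(n-1)` and the `k`-subspace at infinity corresponding to `S`
is not determined by `U`, then every coset `x + S` meets `U` in exactly one complete
affine `k`-subspace. -/
theorem stmt_2 {F : Type*} [Field F] [Fintype F] {q n k : ℕ}
    (hq : Fintype.card F = q) (hn : 2 ≤ n) (hk : k ≤ n - 2)
    (U : Set (Fin n → F)) (hU : U.ncard = q ^ (n - 1))
    (S : Submodule F (Fin n → F)) (hS : Module.finrank F S = k + 1)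
    (hnd : ¬ IsDeterminedBy U S) :
    ∀ x : Fin n → F, ∃ D : Submodule F (Fin n → F), D ≤ S ∧ Module.finrank F D = k ∧
      ∃ y ∈ x +ᵥ (S : Set (Fin n → F)),
        U ∩ (x +ᵥ (S : Set (Fin n → F))) = y +ᵥ (D : Set (Fin n → F)) :=
  stmt_2_general hq U hU S hS hnd
end

section
/- Let F be a finite field with q elements, n ≥ 3, and let U ⊆ F^n with |U| = q^(n−1). Let k be an integer with 0 ≤ k ≤ n−3. If S is a (k+1)-dimensional F-linear subspace of F^n whose corresponding k-subspace at infinity is determined by U, then there exists an (n−1)-dimensional F-linear subspace S' with S ⊆ S' whose corresponding (n−2)-subspace at infinity is determined by U. -/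
/-! If `U` affinely spans the coset `x + S` but has a point `u` outside it, then `U` also
affinely spans `x + (S + F(u - x))`, since that affine span contains `x + S` and `u`. When
`|U| > |S|` such a `u` always exists, so a determined subspace can be enlarged one dimension at
a time as long as `|U|` exceeds its size; with `|U| = q^(n-1)` this reaches dimension `n - 1`. -/

open Pointwise

section

variable {F V : Type*} [Field F] [AddCommGroup V] [Module F V]

lemma mem_vadd_submodule_iff {T : Submodule F V} {x y : V} :
    y ∈ x +ᵥ (T : Set V) ↔ y - x ∈ T := by
  constructor
  · rintro ⟨t, ht, rfl⟩
    simpa using ht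
  · exact fun h => ⟨y - x, h, by simp⟩

lemma vadd_submodule_subset_iff {A : AffineSubspace F V} {T : Submodule F V} {x : V}
    (hx : x ∈ A) : x +ᵥ (T : Set V) ⊆ A ↔ T ≤ A.direction := by
  have hmk : x +ᵥ (T : Set V) = AffineSubspace.mk' x T := by
    ext y
    exact mem_vadd_submodule_iff
  rw [hmk, SetLike.coe_subset_coe, ← AffineSubspace.mk'_le_mk'_iff x, AffineSubspace.mk'_eq hx]

lemma isDeterminedBy_sup_span_singleton {U : Set V} {S : Submodule F V} {x u : V}
    (hx : x +ᵥ (S : Set V) ⊆ affineSpan F (U ∩ (x +ᵥ (S : Set V)))) (hu : u ∈ U) :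
    IsDeterminedBy U (S ⊔ F ∙ (u - x)) := by
  set T := S ⊔ F ∙ (u - x)
  set A := affineSpan F (U ∩ (x +ᵥ (T : Set V)))
  have hSA : x +ᵥ (S : Set V) ⊆ A :=
    hx.trans (affineSpan_mono F (Set.inter_subset_inter_right _
      (Set.vadd_set_mono (SetLike.coe_subset_coe.2 le_sup_left))))
  have hxA : x ∈ A := hSA (mem_vadd_submodule_iff.2 (by simp))
  have huA : u ∈ A := subset_affineSpan F _
    ⟨hu, mem_vadd_submodule_iff.2 (Submodule.mem_sup_right (Submodule.mem_span_singleton_self _))⟩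
  refine ⟨x, (vadd_submodule_subset_iff hxA).2 (sup_le ((vadd_submodule_subset_iff hxA).1 hSA) ?_)⟩
  exact (Submodule.span_singleton_le_iff_mem _ _).2 (AffineSubspace.vsub_mem_direction huA hxA)

variable [Finite F] [Module.Finite F V]

lemma IsDeterminedBy.exists_finrank_succ {U : Set V} {S : Submodule F V}
    (hdet : IsDeterminedBy U S) (hU : Nat.card F ^ Module.finrank F S < U.ncard) :
    ∃ T : Submodule F V, S ≤ T ∧ Module.finrank F T = Module.finrank F S + 1 ∧
      IsDeterminedBy U T := by
  obtain ⟨x, hx⟩ := hdet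
  have hU_not_subset : ¬ U ⊆ x +ᵥ (S : Set V) := by
    intro h
    have : Finite V := Module.finite_iff_finite.mp ‹_›
    have hcard := Set.ncard_le_ncard h (Set.toFinite _)
    rw [Set.ncard_vadd_set, ← Nat.card_coe_set_eq (S : Set V), SetLike.coe_sort_coe,
      Module.natCard_eq_pow_finrank (K := F)] at hcard
    omega
  obtain ⟨u, huU, hux⟩ := Set.not_subset.1 hU_not_subset
  have huxS : u - x ∉ S := fun h => hux (mem_vadd_submodule_iff.2 h)
  exact ⟨_, le_sup_left, Submodule.finrank_sup_span_singleton huxS,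
    isDeterminedBy_sup_span_singleton hx huU⟩

lemma IsDeterminedBy.exists_le_finrank_eq {U : Set V} {S : Submodule F V} {m : ℕ}
    (hdet : IsDeterminedBy U S) (hSm : Module.finrank F S ≤ m) (hU : Nat.card F ^ m ≤ U.ncard) :
    ∃ S' : Submodule F V, S ≤ S' ∧ Module.finrank F S' = m ∧ IsDeterminedBy U S' := by
  obtain ⟨d, hd⟩ := Nat.exists_eq_add_of_le hSm
  induction d generalizing S with
  | zero => exact ⟨S, le_rfl, hd.symm, hdet⟩
  | succ d ih =>
    have hlt : Nat.card F ^ Module.finrank F S < U.ncard :=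
      (Nat.pow_lt_pow_right Finite.one_lt_card (by omega)).trans_le hU
    obtain ⟨T, hST, hT, hdetT⟩ := hdet.exists_finrank_succ hlt
    obtain ⟨S', hTS', hS', hdetS'⟩ := ih hdetT (by omega) (by omega)
    exact ⟨S', hST.trans hTS', hS', hdetS'⟩

end

/-- If `|U| = q^(n-1)` and `U` determines the `k`-subspace at infinity
corresponding to `S` (`k ≤ n-3`), then there is a determined `(n-2)`-subspace at
infinity through it. -/
theorem stmt_5 {F : Type*} [Field F] [Fintype F] {q n k : ℕ}
    (hq : Fintype.card F = q) (hn : 3 ≤ n) (hk : k ≤ n - 3)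
    (U : Set (Fin n → F)) (hU : U.ncard = q ^ (n - 1))
    (S : Submodule F (Fin n → F)) (hS : Module.finrank F S = k + 1)
    (hdet : IsDeterminedBy U S) :
    ∃ S' : Submodule F (Fin n → F), S ≤ S' ∧ Module.finrank F S' = n - 1 ∧
      IsDeterminedBy U S' :=
  hdet.exists_le_finrank_eq (by omega) (by rw [Nat.card_eq_fintype_card, hq, hU])
end

section
/- Let F be a finite field with q elements and let U ⊆ F³ with |U| = q²; assume U is not contained in any affine plane of F³. Suppose there are at least three pairwise distinct 2-dimensional F-linear subspaces of F³ whose corresponding lines at infinity are undetermined by U. Let S₁ be one of these undetermined subspaces, and suppose there exist two distinct parallel affine lines f, g contained in U whose directions are contained in S₁; let D be their common direction. Then every 2-dimensional F-linear subspace whose corresponding line at infinity is undetermined by U contains D; that is, all the undetermined lines at infinity pass through the common ideal point of the lines of U. -/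
/-!
Suppose an undetermined direction `S` does not contain `D`. Then `S` and `D` are complementary,
so every coset `u + S` meets each of the two lines `pf + D`, `pg + D` in exactly one point, and
these two points always differ by the same nonzero vector: the `S`-component of `pg - pf`.
Since `S` is undetermined, `U ∩ (u + S)` is collinear, so each `u ∈ U` lies on the line through
those two points. Hence `U` lies in the plane spanned by the two parallel lines, which is excluded.
-/

open Pointwise

open Module Submodule

section
variable {F V : Type*} [Field F] [AddCommGroup V] [Module F V]

theorem Submodule.mem_vadd_coe_iff {S : Submodule F V} {x y : V} :
    y ∈ x +ᵥ (S : Set V) ↔ y - x ∈ S := by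
  rw [Set.mem_vadd_set_iff_neg_vadd_mem, vadd_eq_add, neg_add_eq_sub, SetLike.mem_coe]

theorem collinear_inter_vadd_of_not_isDeterminedBy {U : Set V}
    {S : Submodule F V} (hS : finrank F S = 2) (hnd : ¬ IsDeterminedBy U S) (x : V) :
    Collinear F (U ∩ (x +ᵥ (S : Set V))) := by
  by_contra hcol
  refine hnd ⟨x, ?_⟩
  set A : AffineSubspace F V := x +ᵥ S.toAffineSubspace
  have hA : (A : Set V) = x +ᵥ (S : Set V) := AffineSubspace.coe_pointwise_vadd x _
  have hAdir : A.direction = S := by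
    rw [AffineSubspace.pointwise_vadd_direction, toAffineSubspace_direction]
  set t := U ∩ (x +ᵥ (S : Set V))
  have hle : affineSpan F t ≤ A := affineSpan_le.2 (hA ▸ Set.inter_subset_right)
  have : FiniteDimensional F S := .of_finrank_pos (by omega)
  have hdir : vectorSpan F t = S := by
    have hle' : vectorSpan F t ≤ S := by
      simpa only [direction_affineSpan, hAdir] using AffineSubspace.direction_le hle
    have : FiniteDimensional F (vectorSpan F t) := finiteDimensional_of_le hle'
    refine eq_of_le_of_finrank_le hle' ?_
    rw [collinear_iff_finrank_le_one] at hcol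
    omega
  have hne : (affineSpan F t : Set V).Nonempty :=
    (affineSpan_nonempty F).2 <| Set.nonempty_iff_ne_empty.2 fun h ↦ hcol (h ▸ collinear_empty F V)
  rw [← hA, AffineSubspace.eq_of_direction_eq_of_nonempty_of_le
    (by rw [direction_affineSpan, hdir, hAdir]) hne hle]

theorem isCompl_of_finrank_add_one_eq [FiniteDimensional F V] {S D : Submodule F V}
    (hS : finrank F S + 1 = finrank F V) (hD : finrank F D = 1) (hDS : ¬ D ≤ S) :
    IsCompl S D := by
  refine (isCompl_iff_disjoint S D (by omega)).2 (disjoint_iff.2 ?_)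
  have : finrank F ↥(D ⊓ S) < finrank F D := finrank_lt_finrank_of_lt (inf_lt_left.2 hDS)
  rw [inf_comm, ← finrank_eq_zero]
  omega

theorem vadd_projection_mem_inter {S D : Submodule F V} (hSD : IsCompl S D) (a u : V) :
    a + D.projection S hSD.symm (u - a) ∈ (a +ᵥ (D : Set V)) ∩ (u +ᵥ (S : Set V)) := by
  refine ⟨mem_vadd_coe_iff.2 ?_, mem_vadd_coe_iff.2 ?_⟩
  · rw [add_sub_cancel_left]
    exact projection_apply_mem _ _
  have := S.neg_mem (sub_projection_mem hSD.symm (u - a))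
  rwa [neg_sub, sub_sub_eq_add_sub, add_comm] at this

theorem subset_vadd_sup_span_of_forall_collinear {S D : Submodule F V} (hSD : IsCompl S D)
    {U : Set V} (hU : ∀ x : V, Collinear F (U ∩ (x +ᵥ (S : Set V)))) {a b : V}
    (ha : a +ᵥ (D : Set V) ⊆ U) (hb : b +ᵥ (D : Set V) ⊆ U) (hab : b - a ∉ D) :
    U ⊆ a +ᵥ ((D ⊔ span F {b - a} : Submodule F V) : Set V) := by
  intro u hu
  set π := D.projection S hSD.symm
  set p := a + π (u - a)
  set r := b + π (u - b)
  have hp := vadd_projection_mem_inter hSD a u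
  have hr := vadd_projection_mem_inter hSD b u
  have hrp : r - p = (b - a) - π (b - a) := by
    simp only [r, p, map_sub]; abel
  have hpr : p ≠ r := by
    intro h
    refine hab ((projection_eq_self_iff hSD.symm _).1 ?_)
    rw [eq_comm, ← sub_eq_zero, ← hrp, h, sub_self]
  have hline : u ∈ line[F, p, r] :=
    (hU u).mem_affineSpan_of_mem_of_ne ⟨ha hp.1, hp.2⟩ ⟨hb hr.1, hr.2⟩
      ⟨hu, mem_vadd_coe_iff.2 (by simp)⟩ hpr
  obtain ⟨c, hc⟩ : ∃ c : F, c • (r - p) = u - p := by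
    have := AffineSubspace.vsub_mem_direction hline (left_mem_affineSpan_pair F p r)
    rwa [direction_affineSpan, vectorSpan_pair_rev, mem_span_singleton] at this
  have : u - a = (π (u - a) - c • π (b - a)) + c • (b - a) :=
    calc u - a = π (u - a) + (u - p) := by simp only [p]; abel
      _ = π (u - a) + c • ((b - a) - π (b - a)) := by rw [← hc, hrp]
      _ = (π (u - a) - c • π (b - a)) + c • (b - a) := by rw [smul_sub]; abel
  rw [mem_vadd_coe_iff, this]
  exact add_mem
    (mem_sup_left (sub_mem (projection_apply_mem _ _) (smul_mem _ _ (projection_apply_mem _ _))))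
    (mem_sup_right (smul_mem _ _ (mem_span_singleton_self _)))

end

theorem stmt_13_general {F : Type*} [Field F]
    (U : Set (Fin 3 → F))
    (hplane : ¬ ∃ (x : Fin 3 → F) (P : Submodule F (Fin 3 → F)),
      Module.finrank F P = 2 ∧ U ⊆ x +ᵥ (P : Set (Fin 3 → F)))
    (pf pg : Fin 3 → F) (D : Submodule F (Fin 3 → F))
    (hD : Module.finrank F D = 1)
    (hf : pf +ᵥ (D : Set (Fin 3 → F)) ⊆ U)
    (hg : pg +ᵥ (D : Set (Fin 3 → F)) ⊆ U)
    (hfg : pf +ᵥ (D : Set (Fin 3 → F)) ≠ pg +ᵥ (D : Set (Fin 3 → F))) :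
    ∀ S : Submodule F (Fin 3 → F), Module.finrank F S = 2 →
      ¬ IsDeterminedBy U S → D ≤ S := by
  intro S hS hnd
  by_contra hDS
  have hSD : IsCompl S D := isCompl_of_finrank_add_one_eq (by simp [hS]) hD hDS
  have hgf : pg - pf ∉ D := fun h ↦
    hfg (vadd_set_eq_vadd_set_iff.2 (SModEq.sub_mem.2 h)).symm
  refine hplane ⟨pf, D ⊔ span F {pg - pf}, ?_,
    subset_vadd_sup_span_of_forall_collinear hSD
      (collinear_inter_vadd_of_not_isDeterminedBy hS hnd) hf hg hgf⟩
  rw [finrank_sup_span_singleton hgf, hD]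

/-- Corollary 6 in the paper: assume `U` is not contained in any affine
plane and at least three pairwise distinct lines at infinity are undetermined, `S₁` being
one of them. If `U` contains two distinct parallel affine lines with common direction
`D ≤ S₁`, then every undetermined line at infinity passes through the common ideal point,
i.e. every 2-dimensional undetermined subspace contains `D`. -/
theorem stmt_13 {F : Type*} [Field F] [Fintype F] {q : ℕ}
    (hq : Fintype.card F = q)
    (U : Set (Fin 3 → F)) (hU : U.ncard = q ^ 2)
    (hplane : ¬ ∃ (x : Fin 3 → F) (P : Submodule F (Fin 3 → F)),
      Module.finrank F P = 2 ∧ U ⊆ x +ᵥ (P : Set (Fin 3 → F)))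
    (S₁ S₂ S₃ : Submodule F (Fin 3 → F))
    (h12 : S₁ ≠ S₂) (h13 : S₁ ≠ S₃) (h23 : S₂ ≠ S₃)
    (hS₁ : Module.finrank F S₁ = 2) (hS₂ : Module.finrank F S₂ = 2)
    (hS₃ : Module.finrank F S₃ = 2)
    (hnd₁ : ¬ IsDeterminedBy U S₁) (hnd₂ : ¬ IsDeterminedBy U S₂)
    (hnd₃ : ¬ IsDeterminedBy U S₃)
    (pf pg : Fin 3 → F) (D : Submodule F (Fin 3 → F))
    (hD : Module.finrank F D = 1) (hDS : D ≤ S₁)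
    (hf : pf +ᵥ (D : Set (Fin 3 → F)) ⊆ U)
    (hg : pg +ᵥ (D : Set (Fin 3 → F)) ⊆ U)
    (hfg : pf +ᵥ (D : Set (Fin 3 → F)) ≠ pg +ᵥ (D : Set (Fin 3 → F))) :
    ∀ S : Submodule F (Fin 3 → F), Module.finrank F S = 2 →
      ¬ IsDeterminedBy U S → D ≤ S :=
  stmt_13_general U hplane pf pg D hD hf hg hfg
end
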